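/- arXiv:1606.04533 — 4 statements merged into one kernel-verified Lean document; each statement's English description precedes it below -/
import Mathlib

section
/- Let ψ be an arithmetic function with positive constants A, B, C such that 0 ≤ ψ(n) < C·n for all n, ∑_{n≤x} ψ(n) ~ A·x²/2 and ∑_{n≤x} ψ(n)² ~ B·x³/3 as x → ∞. If A² < B, then ψ does not have a normal order; i.e., there is no increasing function f : ℕ → ℝ with f(n) ≥ 0 such that for every ε > 0, #{n ≤ x : |ψ(n) − f(n)| ≥ ε·f(n)} = o(x). -/
/-!
Fix `ε` and look at `f` at the point `(k + 1) x`. On the next block `((k + 1) x, (k + 2) x]`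
all but `o(x)` of the `n` have `ψ n > (1 - ε) f n ≥ (1 - ε) f ((k + 1) x)`, so the first
moment bounds `f ((k + 1) x)` from above by about `A (2k + 3) x / (2 (1 - ε))`. On the previous
block `(k x, (k + 1) x]` the non-exceptional `n` satisfy `ψ n ^ 2 ≤ (1 + ε) f ((k + 1) x) ψ n`,
while the `o(x)` exceptional ones contribute only `o(x³)` because `ψ n < C n`; so the second
moment bounds `f ((k + 1) x)` from below by about `2 B (3k² + 3k + 1) x / (3 (1 + ε) A (2k + 1))`.
For large `k` these read `A k / (1 - ε)` and `B k / ((1 + ε) A)`, which are incompatible once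
`ε` is so small that `A² (1 + ε) < B (1 - ε)`.
-/

open Filter Asymptotics

/-- `ψ` has normal order `f`: `f` is increasing and nonnegative, and for every `ε > 0`
the number of `n ≤ x` with `|ψ n - f n| ≥ ε * f n` is `o(x)`. -/
def HasNormalOrder (ψ f : ℕ → ℝ) : Prop :=
  Monotone f ∧ (∀ n, 0 ≤ f n) ∧ ∀ ε : ℝ, 0 < ε →
    (fun x : ℕ => (((Finset.Icc 1 x).filter fun n => ε * f n ≤ |ψ n - f n|).card : ℝ))
      =o[atTop] fun x : ℕ => (x : ℝ)

open Topology

theorem Asymptotics.IsEquivalent.tendsto_div_pow {u : ℕ → ℝ} {c : ℝ} {p : ℕ}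
    (h : u ~[atTop] fun x => c * (x : ℝ) ^ p) :
    Tendsto (fun x : ℕ => u x / (x : ℝ) ^ p) atTop (𝓝 c) := by
  have hdiff : (fun x : ℕ => u x - c * (x : ℝ) ^ p) =o[atTop] fun x : ℕ => (x : ℝ) ^ p :=
    h.isLittleO.trans_isBigO (isBigO_const_mul_self c _ _)
  have := hdiff.tendsto_div_nhds_zero.add_const c
  rw [zero_add] at this
  refine this.congr' ?_
  filter_upwards [eventually_ne_atTop 0] with x hx
  field_simp
  ring

theorem Filter.Tendsto.comp_mul_div_pow {g : ℕ → ℝ} {c : ℝ} {p : ℕ}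
    (h : Tendsto (fun x : ℕ => g x / (x : ℝ) ^ p) atTop (𝓝 c)) {k : ℕ} (hk : 0 < k) :
    Tendsto (fun x : ℕ => g (k * x) / (x : ℝ) ^ p) atTop (𝓝 (c * (k : ℝ) ^ p)) := by
  have := (h.comp (tendsto_id.const_mul_atTop' hk)).mul_const ((k : ℝ) ^ p)
  refine this.congr' ?_
  filter_upwards [eventually_ne_atTop 0] with x hx
  simp only [Function.comp_apply, id, Nat.cast_mul, mul_pow]
  field_simp

theorem Filter.Tendsto.sub_comp_mul_div_pow {g : ℕ → ℝ} {c : ℝ} {p : ℕ}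
    (h : Tendsto (fun x : ℕ => g x / (x : ℝ) ^ p) atTop (𝓝 c)) {a b : ℕ}
    (ha : 0 < a) (hb : 0 < b) :
    Tendsto (fun x : ℕ => (g (b * x) - g (a * x)) / (x : ℝ) ^ p) atTop
      (𝓝 (c * ((b : ℝ) ^ p - (a : ℝ) ^ p))) := by
  simpa only [sub_div, mul_sub] using (h.comp_mul_div_pow hb).sub (h.comp_mul_div_pow ha)

theorem div_le_div_of_tendsto_of_sandwich {ι : Type*} {l : Filter ι} [l.NeBot]
    {y a b c d : ι → ℝ} {α β γ δ : ℝ}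
    (ha : Tendsto a l (𝓝 α)) (hb : Tendsto b l (𝓝 β)) (hc : Tendsto c l (𝓝 γ))
    (hd : Tendsto d l (𝓝 δ)) (hα : 0 < α) (hγ : 0 < γ)
    (hup : ∀ᶠ x in l, a x * y x ≤ b x) (hlow : ∀ᶠ x in l, d x ≤ c x * y x) :
    δ / γ ≤ β / α := by
  refine le_of_tendsto_of_tendsto (hd.div hc hγ.ne') (hb.div ha hα.ne') ?_
  filter_upwards [hup, hlow, ha.eventually_const_lt hα, hc.eventually_const_lt hγ]
    with x hupx hlowx hax hcx
  calc d x / c x ≤ y x := (div_le_iff₀ hcx).2 (by linarith)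
    _ ≤ b x / a x := (le_div_iff₀ hax).2 (by linarith)

section Finset

variable {ι : Type*} {ψ f : ι → ℝ} {ε t : ℝ} {s : Finset ι}

theorem one_sub_mul_mul_card_close_le_sum (hε : ε ≤ 1) (hft : ∀ n ∈ s, t ≤ f n)
    (hψ : ∀ n ∈ s, 0 ≤ ψ n) :
    (1 - ε) * t * (s.filter fun n => ¬ ε * f n ≤ |ψ n - f n|).card ≤ ∑ n ∈ s, ψ n := by
  calc (1 - ε) * t * (s.filter fun n => ¬ ε * f n ≤ |ψ n - f n|).card
      = ∑ n ∈ s.filter (fun n => ¬ ε * f n ≤ |ψ n - f n|), (1 - ε) * t := by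
        rw [Finset.sum_const, nsmul_eq_mul, mul_comm]
    _ ≤ ∑ n ∈ s.filter (fun n => ¬ ε * f n ≤ |ψ n - f n|), ψ n := by
        refine Finset.sum_le_sum fun n hn => ?_
        obtain ⟨hns, hclose⟩ := Finset.mem_filter.1 hn
        have := (abs_lt.1 (not_le.1 hclose)).1
        nlinarith [hft n hns]
    _ ≤ ∑ n ∈ s, ψ n :=
        Finset.sum_le_sum_of_subset_of_nonneg (Finset.filter_subset _ _) fun n hn _ => hψ n hn

theorem sum_sq_le_mul_sum_add_card_far (hε : 0 ≤ ε) (ht : 0 ≤ t) {M : ℝ}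
    (hft : ∀ n ∈ s, f n ≤ t) (hψ : ∀ n ∈ s, 0 ≤ ψ n ∧ ψ n ≤ M) :
    ∑ n ∈ s, ψ n ^ 2 ≤
      (1 + ε) * t * ∑ n ∈ s, ψ n
        + M ^ 2 * (s.filter fun n => ε * f n ≤ |ψ n - f n|).card := by
  have hterm : ∀ n ∈ s, ψ n ^ 2 ≤
      (1 + ε) * t * ψ n + if ε * f n ≤ |ψ n - f n| then M ^ 2 else 0 := by
    intro n hn
    obtain ⟨hψ0, hψM⟩ := hψ n hn
    have hterm_nonneg : 0 ≤ (1 + ε) * t * ψ n := by positivity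
    split_ifs with hfar
    · nlinarith
    · have hψt : ψ n ≤ (1 + ε) * t := by
        nlinarith [(abs_lt.1 (not_le.1 hfar)).2, hft n hn]
      nlinarith [mul_le_mul_of_nonneg_left hψt hψ0]
  calc ∑ n ∈ s, ψ n ^ 2
      ≤ ∑ n ∈ s, ((1 + ε) * t * ψ n + if ε * f n ≤ |ψ n - f n| then M ^ 2 else 0) :=
        Finset.sum_le_sum hterm
    _ = _ := by
        rw [Finset.sum_add_distrib, ← Finset.mul_sum, Finset.sum_ite, Finset.sum_const_zero,
          add_zero, Finset.sum_const, nsmul_eq_mul, mul_comm (M ^ 2)]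

end Finset

def partialSum (g : ℕ → ℝ) (x : ℕ) : ℝ := ∑ n ∈ Finset.Icc 1 x, g n

noncomputable def exceptionalCount (ψ f : ℕ → ℝ) (ε : ℝ) (x : ℕ) : ℝ :=
  ((Finset.Icc 1 x).filter fun n => ε * f n ≤ |ψ n - f n|).card

theorem partialSum_sub_partialSum (g : ℕ → ℝ) {a b : ℕ} (hab : a ≤ b) :
    partialSum g b - partialSum g a = ∑ n ∈ Finset.Ioc a b, g n := by
  have hIoc (x : ℕ) : Finset.Icc 1 x = Finset.Ioc 0 x := Finset.Icc_add_one_left_eq_Ioc 0 x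
  rw [partialSum, partialSum, hIoc, hIoc, sub_eq_iff_eq_add',
    Finset.sum_Ioc_consecutive g a.zero_le hab]

section Intervals

variable {ψ f : ℕ → ℝ} {ε : ℝ} {a b : ℕ}

theorem card_far_Ioc_le_exceptionalCount :
    ((Finset.Ioc a b).filter fun n => ε * f n ≤ |ψ n - f n|).card
      ≤ exceptionalCount ψ f ε b := by
  unfold exceptionalCount
  gcongr
  intro n
  simp only [Finset.mem_Ioc, Finset.mem_Icc]
  omega

theorem one_sub_mul_sub_exceptionalCount_mul_le (hε : ε ≤ 1) (hf : Monotone f) (hfa : 0 ≤ f a)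
    (hψ : ∀ n, 1 ≤ n → 0 ≤ ψ n) (hab : a ≤ b) :
    (1 - ε) * ((b : ℝ) - a - exceptionalCount ψ f ε b) * f a
      ≤ partialSum ψ b - partialSum ψ a := by
  have hclose := one_sub_mul_mul_card_close_le_sum (s := Finset.Ioc a b) (ψ := ψ) hε
    (fun n hn => hf (Finset.mem_Ioc.1 hn).1.le)
    (fun n hn => hψ n (Nat.one_le_of_lt (Finset.mem_Ioc.1 hn).1))
  have hcard : ((b : ℝ) - a - exceptionalCount ψ f ε b) ≤
      ((Finset.Ioc a b).filter fun n => ¬ ε * f n ≤ |ψ n - f n|).card := by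
    have hsplit := congrArg (Nat.cast : ℕ → ℝ) (Finset.card_filter_add_card_filter_not
      (s := Finset.Ioc a b) fun n => ε * f n ≤ |ψ n - f n|)
    push_cast [Nat.card_Ioc, Nat.cast_sub hab] at hsplit
    linarith [card_far_Ioc_le_exceptionalCount (ψ := ψ) (f := f) (ε := ε) (a := a) (b := b)]
  rw [partialSum_sub_partialSum ψ hab]
  nlinarith [mul_le_mul_of_nonneg_left hcard (mul_nonneg (sub_nonneg.2 hε) hfa)]

theorem partialSum_sq_sub_le {C : ℝ} (hε : 0 ≤ ε) (hf : Monotone f) (hfb : 0 ≤ f b)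
    (hψ : ∀ n, 1 ≤ n → 0 ≤ ψ n ∧ ψ n < C * n) (hab : a ≤ b) :
    partialSum (fun n => ψ n ^ 2) b - partialSum (fun n => ψ n ^ 2) a ≤
      (1 + ε) * f b * (partialSum ψ b - partialSum ψ a)
        + (C * b) ^ 2 * exceptionalCount ψ f ε b := by
  have hbound : ∀ n ∈ Finset.Ioc a b, 0 ≤ ψ n ∧ ψ n ≤ C * b := by
    intro n hn
    obtain ⟨han, hnb⟩ := Finset.mem_Ioc.1 hn
    obtain ⟨hψ0, hψC⟩ := hψ n (by omega)
    have hC : 0 < C := pos_of_mul_pos_left (hψ0.trans_lt hψC) n.cast_nonneg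
    exact ⟨hψ0, hψC.le.trans (by gcongr)⟩
  rw [partialSum_sub_partialSum _ hab, partialSum_sub_partialSum _ hab]
  refine (sum_sq_le_mul_sum_add_card_far hε hfb (fun n hn => hf (Finset.mem_Ioc.1 hn).2)
    hbound).trans ?_
  gcongr
  exact card_far_Ioc_le_exceptionalCount

end Intervals

theorem moment_ratio_le_of_interval_bounds {S T E f : ℕ → ℝ} {A B C ε : ℝ} (hA : 0 < A)
    (hε : |ε| < 1) {k : ℕ} (hk : 0 < k)
    (hS : Tendsto (fun x : ℕ => S x / (x : ℝ) ^ 2) atTop (𝓝 (A / 2)))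
    (hT : Tendsto (fun x : ℕ => T x / (x : ℝ) ^ 3) atTop (𝓝 (B / 3)))
    (hE : Tendsto (fun x : ℕ => E x / (x : ℝ)) atTop (𝓝 0))
    (hlow : ∀ a b : ℕ, a ≤ b → (1 - ε) * ((b : ℝ) - a - E b) * f a ≤ S b - S a)
    (hup : ∀ a b : ℕ, a ≤ b →
      T b - T a ≤ (1 + ε) * f b * (S b - S a) + (C * b) ^ 2 * E b) :
    B / 3 * (((k : ℝ) + 1) ^ 3 - k ^ 3) / ((1 + ε) * (A / 2 * (((k : ℝ) + 1) ^ 2 - k ^ 2)))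
      ≤ A / 2 * (((k : ℝ) + 2) ^ 2 - ((k : ℝ) + 1) ^ 2) / (1 - ε) := by
  obtain ⟨hε₁, hε₂⟩ := abs_lt.1 hε
  have hk₀ : (0 : ℝ) ≤ k := k.cast_nonneg
  have hE₁ : Tendsto (fun x : ℕ => E x / (x : ℝ) ^ 1) atTop (𝓝 0) := by simpa using hE
  have hE' (m : ℕ) (hm : 0 < m) :
      Tendsto (fun x : ℕ => E (m * x) / (x : ℝ)) atTop (𝓝 0) := by
    simpa using hE₁.comp_mul_div_pow hm
  have hS_upper := hS.sub_comp_mul_div_pow (a := k + 1) (b := k + 2) (by omega) (by omega)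
  have hS_lower := hS.sub_comp_mul_div_pow (a := k) (b := k + 1) hk (by omega)
  have hT_lower := hT.sub_comp_mul_div_pow (a := k) (b := k + 1) hk (by omega)
  push_cast at hS_upper hS_lower hT_lower
  have hcoef_upper := ((hE' (k + 2) (by omega)).const_sub 1).const_mul (1 - ε)
  have hbound_lower :=
    hT_lower.sub ((hE' (k + 1) (by omega)).const_mul (C ^ 2 * ((k : ℝ) + 1) ^ 2))
  rw [sub_zero, mul_one] at hcoef_upper
  rw [mul_zero, sub_zero] at hbound_lower
  refine div_le_div_of_tendsto_of_sandwich (y := fun x : ℕ => f ((k + 1) * x) / x)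
    hcoef_upper hS_upper (hS_lower.const_mul (1 + ε)) hbound_lower (by linarith)
    (mul_pos (by linarith) (by nlinarith)) ?_ ?_
  · filter_upwards [eventually_ne_atTop 0] with x hx
    have := hlow ((k + 1) * x) ((k + 2) * x) (by gcongr; omega)
    push_cast at this
    have hx' : (x : ℝ) ≠ 0 := Nat.cast_ne_zero.2 hx
    calc (1 - ε) * (1 - E ((k + 2) * x) / x) * (f ((k + 1) * x) / x)
        = (1 - ε) * ((k + 2) * x - (k + 1) * x - E ((k + 2) * x)) * f ((k + 1) * x) / x ^ 2 := by
          field_simp; ring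
      _ ≤ _ := by gcongr
  · filter_upwards [eventually_ne_atTop 0] with x hx
    have := hup (k * x) ((k + 1) * x) (by gcongr; omega)
    push_cast at this
    have hx' : (x : ℝ) ≠ 0 := Nat.cast_ne_zero.2 hx
    calc (T ((k + 1) * x) - T (k * x)) / x ^ 3 - C ^ 2 * (k + 1) ^ 2 * (E ((k + 1) * x) / x)
        = (T ((k + 1) * x) - T (k * x) - (C * ((k + 1) * x)) ^ 2 * E ((k + 1) * x)) / x ^ 3 := by
          field_simp
      _ ≤ (1 + ε) * f ((k + 1) * x) * (S ((k + 1) * x) - S (k * x)) / x ^ 3 := by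
          gcongr; linarith
      _ = _ := by field_simp

theorem moment_ratio_lt_of_mul_lt {A B ε k : ℝ} (hA : 0 < A) (hε : |ε| < 1) (hk₀ : 0 ≤ k)
    (hk : A ^ 2 * (1 + ε) * (k + 1) < B * (1 - ε) * k) :
    A / 2 * ((k + 2) ^ 2 - (k + 1) ^ 2) / (1 - ε)
      < B / 3 * ((k + 1) ^ 3 - k ^ 3) / ((1 + ε) * (A / 2 * ((k + 1) ^ 2 - k ^ 2))) := by
  obtain ⟨hε₁, hε₂⟩ := abs_lt.1 hε
  rw [div_lt_div_iff₀ (by linarith) (mul_pos (by linarith) (by nlinarith))]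
  nlinarith [mul_pos (mul_pos hA hA) (by linarith : 0 < 1 + ε)]

theorem exists_pos_nat_mul_lt_of_sq_lt {A B : ℝ} (hAB : A ^ 2 < B) :
    ∃ ε : ℝ, ∃ k : ℕ, 0 < ε ∧ ε < 1 ∧ 0 < k ∧
      A ^ 2 * (1 + ε) * (k + 1) < B * (1 - ε) * k := by
  have hA2 := sq_nonneg A
  set ε := (B - A ^ 2) / (2 * (B + A ^ 2))
  have hsum : 0 < B + A ^ 2 := by linarith
  have hε₀ : 0 < ε := div_pos (by linarith) (by linarith)
  have hε₁ : ε < 1 := by rw [div_lt_one (by linarith)]; linarith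
  have hgap : B * (1 - ε) - A ^ 2 * (1 + ε) = (B - A ^ 2) / 2 := by
    simp only [ε]; field_simp; ring
  obtain ⟨k, hk⟩ := exists_nat_gt (A ^ 2 * (1 + ε) / ((B - A ^ 2) / 2))
  have hk₀ : (0 : ℝ) < k := lt_of_le_of_lt (by positivity) hk
  refine ⟨ε, k, hε₀, hε₁, Nat.cast_pos.1 hk₀, ?_⟩
  rw [div_lt_iff₀ (by linarith), ← hgap] at hk
  linarith

theorem no_normal_order_of_moments_general (ψ : ℕ → ℝ) (A B C : ℝ)
    (hA : 0 < A)
    (hψ : ∀ n : ℕ, 1 ≤ n → 0 ≤ ψ n ∧ ψ n < C * n)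
    (h1 : (fun x : ℕ => ∑ n ∈ Finset.Icc 1 x, ψ n) ~[atTop]
      fun x : ℕ => A * (x : ℝ) ^ 2 / 2)
    (h2 : (fun x : ℕ => ∑ n ∈ Finset.Icc 1 x, (ψ n) ^ 2) ~[atTop]
      fun x : ℕ => B * (x : ℝ) ^ 3 / 3)
    (hAB : A ^ 2 < B) :
    ¬ ∃ f : ℕ → ℝ, HasNormalOrder ψ f := by
  rintro ⟨f, hf_mono, hf_nonneg, hf_exc⟩
  obtain ⟨ε, k, hε₀, hε₁, hk₀, hk⟩ := exists_pos_nat_mul_lt_of_sq_lt hAB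
  have hε : |ε| < 1 := abs_lt.2 ⟨by linarith, hε₁⟩
  have hS : Tendsto (fun x : ℕ => partialSum ψ x / (x : ℝ) ^ 2) atTop (𝓝 (A / 2)) :=
    (h1.congr_right (.of_forall fun x => by ring)).tendsto_div_pow
  have hT : Tendsto (fun x : ℕ => partialSum (fun n => ψ n ^ 2) x / (x : ℝ) ^ 3) atTop
      (𝓝 (B / 3)) :=
    (h2.congr_right (.of_forall fun x => by ring)).tendsto_div_pow
  have hmoments := moment_ratio_le_of_interval_bounds (E := exceptionalCount ψ f ε)
    hA hε hk₀ hS hT (hf_exc ε hε₀).tendsto_div_nhds_zero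
    (fun a b hab => one_sub_mul_sub_exceptionalCount_mul_le hε₁.le hf_mono (hf_nonneg a)
      (fun n hn => (hψ n hn).1) hab)
    (fun a b hab => partialSum_sq_sub_le hε₀.le hf_mono (hf_nonneg b) hψ hab)
  exact (moment_ratio_lt_of_mul_lt hA hε k.cast_nonneg hk).not_ge hmoments

theorem no_normal_order_of_moments (ψ : ℕ → ℝ) (A B C : ℝ)
    (hA : 0 < A) (hB : 0 < B) (hC : 0 < C)
    (hψ : ∀ n : ℕ, 1 ≤ n → 0 ≤ ψ n ∧ ψ n < C * n)
    (h1 : (fun x : ℕ => ∑ n ∈ Finset.Icc 1 x, ψ n) ~[atTop]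
      fun x : ℕ => A * (x : ℝ) ^ 2 / 2)
    (h2 : (fun x : ℕ => ∑ n ∈ Finset.Icc 1 x, (ψ n) ^ 2) ~[atTop]
      fun x : ℕ => B * (x : ℝ) ^ 3 / 3)
    (hAB : A ^ 2 < B) :
    ¬ ∃ f : ℕ → ℝ, HasNormalOrder ψ f :=
  no_normal_order_of_moments_general ψ A B C hA hψ h1 h2 hAB
end

section
/- Euler's totient function φ does not have a normal order; i.e., there is no increasing nonnegative function f such that for every ε > 0 the number of n ≤ x with |φ(n) − f(n)| ≥ ε f(n) is o(x) as x → ∞. -/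
/-!
If `f` were a normal order for `φ`, then for large `N` all but `N/100` integers `n ≤ 102N` would
satisfy `|φ n - f n| < f n / 20`. Such an `n₂` exists among the multiples of `6` in `(101N, 102N]`,
where `φ n ≤ n/3 ≤ 34N`, and such an `n₁` among the odd `n ∈ (100N, 101N]` with `φ n ≥ 2n/5 > 40N`.
The latter set has density at least `1/12`: since `φ n / n ≥ 1 - ∑_{p ∣ n} 1/p`, Markov's inequality
applies once the average of `∑_{p ∣ n} 1/p` over odd `n` is bounded by `∑_{d ≥ 3 odd} 1/d² ≤ 1/4`,
up to an error `∑_{d ≤ 101N} 1/d = O(√N)`. As `f` is monotone, `19 φ n₁ < 21 φ n₂`, i.e.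
`760N < 714N`.
-/

open Filter Asymptotics

open Finset

lemma card_filter_dvd_Ioc (d a b : ℕ) (hab : a ≤ b) :
    #{x ∈ Ioc a b | d ∣ x} = b / d - a / d := by
  have hunion : {x ∈ Ioc 0 a | d ∣ x} ∪ {x ∈ Ioc a b | d ∣ x}
      = ({x ∈ Ioc 0 b | d ∣ x} : Finset ℕ) := by
    rw [← filter_union, Ioc_union_Ioc_eq_Ioc (Nat.zero_le a) hab]
  have hdisj : Disjoint ({x ∈ Ioc 0 a | d ∣ x} : Finset ℕ) {x ∈ Ioc a b | d ∣ x} :=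
    disjoint_filter_filter (Ioc_disjoint_Ioc_of_le le_rfl)
  have := card_union_of_disjoint hdisj
  rw [hunion, Nat.Ioc_filter_dvd_card_eq_div, Nat.Ioc_filter_dvd_card_eq_div] at this
  omega

lemma card_filter_dvd_Ioc_le {d : ℕ} (hd : 0 < d) {a b : ℕ} (hab : a ≤ b) :
    (#{x ∈ Ioc a b | d ∣ x} : ℝ) ≤ ((b : ℝ) - a) / d + 1 := by
  have hd' : (0 : ℝ) < d := by exact_mod_cast hd
  rw [card_filter_dvd_Ioc d a b hab, Nat.cast_sub (Nat.div_le_div_right hab)]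
  have hb : ((b / d : ℕ) : ℝ) * d ≤ b := by exact_mod_cast Nat.div_mul_le_self b d
  have ha : (a : ℝ) < ((a / d : ℕ) : ℝ) * d + d := by exact_mod_cast Nat.lt_div_mul_add hd
  rw [div_add_one hd'.ne', le_div_iff₀ hd']
  nlinarith

lemma le_card_filter_dvd_Ioc {d : ℕ} (hd : 0 < d) {a b : ℕ} (hab : a ≤ b) :
    ((b : ℝ) - a) / d - 1 ≤ #{x ∈ Ioc a b | d ∣ x} := by
  have hd' : (0 : ℝ) < d := by exact_mod_cast hd
  rw [card_filter_dvd_Ioc d a b hab, Nat.cast_sub (Nat.div_le_div_right hab)]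
  have hb : (b : ℝ) < ((b / d : ℕ) : ℝ) * d + d := by exact_mod_cast Nat.lt_div_mul_add hd
  have ha : ((a / d : ℕ) : ℝ) * d ≤ a := by exact_mod_cast Nat.div_mul_le_self a d
  rw [div_sub_one hd'.ne', div_le_iff₀ hd']
  nlinarith

lemma le_card_filter_not_two_dvd_Ioc {a b : ℕ} (hab : a ≤ b) :
    ((b : ℝ) - a) / 2 - 1 ≤ #{x ∈ Ioc a b | ¬ 2 ∣ x} := by
  have hsplit := card_filter_add_card_filter_not (s := Ioc a b) (p := (2 ∣ ·))
  rw [Nat.card_Ioc] at hsplit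
  have hsplit' : (#{x ∈ Ioc a b | ¬ 2 ∣ x} : ℝ)
      = ((b : ℝ) - a) - #{x ∈ Ioc a b | 2 ∣ x} := by
    rw [← Nat.cast_sub hab]; push_cast [← hsplit]; ring
  have := card_filter_dvd_Ioc_le two_pos hab
  push_cast at this
  linarith

lemma one_sub_sum_le_prod_one_sub {ι R : Type*} [CommRing R] [LinearOrder R]
    [IsStrictOrderedRing R] (s : Finset ι) {x : ι → R} (h0 : ∀ i ∈ s, 0 ≤ x i)
    (h1 : ∀ i ∈ s, x i ≤ 1) :
    1 - ∑ i ∈ s, x i ≤ ∏ i ∈ s, (1 - x i) := by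
  classical
  induction s using Finset.induction_on with
  | empty => simp
  | insert i s hi ih =>
    rw [sum_insert hi, prod_insert hi]
    have hxi := h0 i (mem_insert_self i s)
    have hxi' := h1 i (mem_insert_self i s)
    have hs : 0 ≤ ∑ j ∈ s, x j := sum_nonneg fun j hj => h0 j (mem_insert_of_mem hj)
    have ih := ih (fun j hj => h0 j (mem_insert_of_mem hj))
      (fun j hj => h1 j (mem_insert_of_mem hj))
    nlinarith [mul_le_mul_of_nonneg_left ih (sub_nonneg.2 hxi')]

lemma Nat.totient_eq_mul_prod_one_sub_inv (n : ℕ) :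
    (n.totient : ℝ) = n * ∏ p ∈ n.primeFactors, (1 - (p : ℝ)⁻¹) := by
  have := congrArg (Rat.cast : ℚ → ℝ) (Nat.totient_eq_mul_prod_factors n)
  push_cast at this
  exact this

lemma Nat.mul_one_sub_sum_inv_primeFactors_le_totient (n : ℕ) :
    n * (1 - ∑ p ∈ n.primeFactors, (p : ℝ)⁻¹) ≤ n.totient := by
  rw [Nat.totient_eq_mul_prod_one_sub_inv]
  refine mul_le_mul_of_nonneg_left (one_sub_sum_le_prod_one_sub _ (fun p _ => by positivity)
    fun p hp => inv_le_one_of_one_le₀ ?_) (Nat.cast_nonneg n)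
  exact_mod_cast (Nat.prime_of_mem_primeFactors hp).one_le

lemma Nat.totient_le_div_three_of_six_dvd {n : ℕ} (h : 6 ∣ n) : (n.totient : ℝ) ≤ n / 3 := by
  rcases eq_or_ne n 0 with rfl | hn
  · simp
  have h23 : {2, 3} ⊆ n.primeFactors := by
    intro p hp
    simp only [mem_insert, mem_singleton] at hp
    rcases hp with rfl | rfl <;> refine Nat.mem_primeFactors.2 ⟨by norm_num, ?_, hn⟩ <;>
      exact dvd_trans (by norm_num) h
  have hfactor : ∀ p ∈ n.primeFactors, 0 ≤ 1 - (p : ℝ)⁻¹ ∧ 1 - (p : ℝ)⁻¹ ≤ 1 := fun p hp =>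
    ⟨sub_nonneg.2 (inv_le_one_of_one_le₀ <| by
      exact_mod_cast (Nat.prime_of_mem_primeFactors hp).one_le), sub_le_self _ (by positivity)⟩
  have hrest : ∏ p ∈ n.primeFactors \ {2, 3}, (1 - (p : ℝ)⁻¹) ≤ 1 :=
    prod_le_one (fun p hp => (hfactor p (mem_sdiff.1 hp).1).1)
      (fun p hp => (hfactor p (mem_sdiff.1 hp).1).2)
  rw [Nat.totient_eq_mul_prod_one_sub_inv, ← prod_sdiff h23, prod_pair (by norm_num)]
  have hn0 : (0 : ℝ) ≤ n := Nat.cast_nonneg n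
  norm_num
  nlinarith

lemma sum_range_inv_sq_two_mul_add_three_le (K : ℕ) :
    ∑ j ∈ range K, ((2 * j + 3 : ℝ) ^ 2)⁻¹ ≤ 1 / 4 := by
  have hterm : ∀ j ∈ range K, ((2 * j + 3 : ℝ) ^ 2)⁻¹
      ≤ (4 * ((j : ℝ) + 1))⁻¹ - (4 * (((j + 1 : ℕ) : ℝ) + 1))⁻¹ := by
    intro j _
    push_cast
    rw [inv_sub_inv (by positivity) (by positivity), inv_eq_one_div,
      div_le_div_iff₀ (by positivity) (by positivity)]
    nlinarith
  calc ∑ j ∈ range K, ((2 * j + 3 : ℝ) ^ 2)⁻¹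
      ≤ ∑ j ∈ range K, ((4 * ((j : ℝ) + 1))⁻¹ - (4 * (((j + 1 : ℕ) : ℝ) + 1))⁻¹) :=
        sum_le_sum hterm
    _ = 1 / 4 - (4 * ((K : ℝ) + 1))⁻¹ := by
        rw [sum_range_sub' (fun j : ℕ => (4 * ((j : ℝ) + 1))⁻¹)]; norm_num
    _ ≤ 1 / 4 := sub_le_self _ (by positivity)

lemma sq_sum_range_inv_two_mul_add_three_le (K : ℕ) :
    (∑ j ∈ range K, (2 * j + 3 : ℝ)⁻¹) ^ 2 ≤ K / 4 := by
  have hcs := sum_mul_sq_le_sq_mul_sq (range K) (fun _ => (1 : ℝ)) (fun j => (2 * j + 3 : ℝ)⁻¹)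
  simp only [one_mul, one_pow, sum_const, card_range, nsmul_eq_mul, mul_one, inv_pow] at hcs
  calc _ ≤ (K : ℝ) * ∑ j ∈ range K, ((2 * j + 3 : ℝ) ^ 2)⁻¹ := hcs
    _ ≤ K * (1 / 4) :=
        mul_le_mul_of_nonneg_left (sum_range_inv_sq_two_mul_add_three_le K) (Nat.cast_nonneg K)
    _ = K / 4 := by ring

lemma sum_inv_primeFactors_le_sum_range {n b : ℕ} (hn : n ∈ Ioc 0 b) (hodd : ¬ 2 ∣ n) :
    ∑ p ∈ n.primeFactors, (p : ℝ)⁻¹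
      ≤ ∑ j ∈ range b, if 2 * j + 3 ∣ n then (2 * j + 3 : ℝ)⁻¹ else 0 := by
  set g : ℕ → ℝ := fun d => if d ∣ n then (d : ℝ)⁻¹ else 0
  have hsub : n.primeFactors ⊆ (range b).image (2 * · + 3) := by
    intro p hp
    obtain ⟨hp, hpn, -⟩ := Nat.mem_primeFactors.1 hp
    have hp2 : ¬ 2 ∣ p := fun h2 => hodd (h2.trans hpn)
    have := hp.two_le
    have := Nat.le_of_dvd (mem_Ioc.1 hn).1 hpn
    have := (mem_Ioc.1 hn).2
    exact mem_image.2 ⟨(p - 3) / 2, mem_range.2 (by omega), by omega⟩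
  calc ∑ p ∈ n.primeFactors, (p : ℝ)⁻¹ = ∑ p ∈ n.primeFactors, g p :=
        sum_congr rfl fun p hp => (if_pos (Nat.dvd_of_mem_primeFactors hp)).symm
    _ ≤ ∑ d ∈ (range b).image (2 * · + 3), g d :=
        sum_le_sum_of_subset_of_nonneg hsub fun d _ _ => by positivity
    _ = ∑ j ∈ range b, g (2 * j + 3) := sum_image fun i _ j _ h => by simpa using h
    _ = _ := by simp [g]

lemma sum_sum_inv_primeFactors_le (a b : ℕ) (hab : a ≤ b) :
    ∑ n ∈ Ioc a b with ¬ 2 ∣ n, ∑ p ∈ n.primeFactors, (p : ℝ)⁻¹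
      ≤ ((b : ℝ) - a) / 4 + ∑ j ∈ range b, (2 * j + 3 : ℝ)⁻¹ := by
  set S := ({n ∈ Ioc a b | ¬ 2 ∣ n} : Finset ℕ)
  have hmult : ∀ d : ℕ, 0 < d → (#{n ∈ S | d ∣ n} : ℝ) ≤ ((b : ℝ) - a) / d + 1 := fun d hd =>
    (Nat.cast_le.2 (card_le_card (by intro n; simp +contextual [S]))).trans
      (card_filter_dvd_Ioc_le hd hab)
  calc ∑ n ∈ S, ∑ p ∈ n.primeFactors, (p : ℝ)⁻¹
      ≤ ∑ n ∈ S, ∑ j ∈ range b, if 2 * j + 3 ∣ n then (2 * j + 3 : ℝ)⁻¹ else 0 := by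
        refine sum_le_sum fun n hn => ?_
        obtain ⟨hn, hodd⟩ := mem_filter.1 hn
        exact sum_inv_primeFactors_le_sum_range (Ioc_subset_Ioc_left (Nat.zero_le a) hn) hodd
    _ = ∑ j ∈ range b, (2 * j + 3 : ℝ)⁻¹ * #{n ∈ S | 2 * j + 3 ∣ n} := by
        rw [sum_comm]
        refine sum_congr rfl fun j _ => ?_
        rw [← sum_filter, sum_const, nsmul_eq_mul, mul_comm]
    _ ≤ ∑ j ∈ range b, (2 * j + 3 : ℝ)⁻¹ * (((b : ℝ) - a) / (2 * j + 3 : ℕ) + 1) :=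
        sum_le_sum fun j _ => mul_le_mul_of_nonneg_left (hmult _ (by omega)) (by positivity)
    _ = ((b : ℝ) - a) * ∑ j ∈ range b, ((2 * j + 3 : ℝ) ^ 2)⁻¹
          + ∑ j ∈ range b, (2 * j + 3 : ℝ)⁻¹ := by
        rw [mul_sum, ← sum_add_distrib]
        refine sum_congr rfl fun j _ => ?_
        push_cast
        field_simp
    _ ≤ ((b : ℝ) - a) / 4 + ∑ j ∈ range b, (2 * j + 3 : ℝ)⁻¹ := by
        have := mul_le_mul_of_nonneg_left (sum_range_inv_sq_two_mul_add_three_le b)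
          (sub_nonneg.2 (Nat.cast_le.2 hab))
        linarith

lemma le_card_filter_odd_two_fifths_le_totient {a b : ℕ} (hab : a ≤ b) :
    ((b : ℝ) - a) / 12 - 1 - 5 / 3 * ∑ j ∈ range b, (2 * j + 3 : ℝ)⁻¹
      ≤ #{n ∈ Ioc a b | ¬ 2 ∣ n ∧ (2 / 5 : ℝ) * (n : ℕ) ≤ n.totient} := by
  set T := ({n ∈ Ioc a b | ¬ 2 ∣ n} : Finset ℕ)
  set small := T.filter fun n : ℕ => (n.totient : ℝ) < 2 / 5 * n
  -- Markov's inequality: `φ n < 2n/5` forces `∑_{p ∣ n} 1/p > 3/5`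
  have hmarkov : #small • (3 / 5 : ℝ) ≤ ∑ n ∈ T, ∑ p ∈ n.primeFactors, (p : ℝ)⁻¹ := by
    refine (card_nsmul_le_sum small _ _ fun n hn => ?_).trans
      (sum_le_sum_of_subset_of_nonneg (filter_subset _ _) fun n _ _ => by positivity)
    obtain ⟨hnT, hsmall⟩ := mem_filter.1 hn
    have hn0 : (0 : ℝ) < n := by
      have := (mem_Ioc.1 (mem_filter.1 hnT).1).1
      exact_mod_cast (show 0 < n by omega)
    nlinarith [Nat.mul_one_sub_sum_inv_primeFactors_le_totient n]
  have hsplit := card_filter_add_card_filter_not (s := T)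
    (p := fun n : ℕ => (n.totient : ℝ) < 2 / 5 * n)
  simp only [T, small, filter_filter, not_lt, nsmul_eq_mul] at hsplit hmarkov ⊢
  have hsplitR := congrArg (Nat.cast : ℕ → ℝ) hsplit
  push_cast at hsplitR
  linarith [le_card_filter_not_two_dvd_Ioc hab, sum_sum_inv_primeFactors_le a b hab]

lemma lt_card_filter_odd_two_fifths_le_totient {a N : ℕ} (ha : a ≤ 100 * N)
    (hN : 1000000 ≤ N) :
    (N : ℝ) / 100 < #{n ∈ Ioc a (a + N) | ¬ 2 ∣ n ∧ (2 / 5 : ℝ) * (n : ℕ) ≤ n.totient} := by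
  have hcard := le_card_filter_odd_two_fifths_le_totient (Nat.le_add_right a N)
  have hE := sq_sum_range_inv_two_mul_add_three_le (a + N)
  have hE₀ : 0 ≤ ∑ j ∈ range (a + N), (2 * j + 3 : ℝ)⁻¹ := by positivity
  have haR : (a : ℝ) ≤ 100 * N := by exact_mod_cast ha
  have hNR : (1000000 : ℝ) ≤ N := by exact_mod_cast hN
  push_cast at hcard hE
  nlinarith

lemma exists_abs_sub_lt_of_card_lt {ψ f : ℕ → ℝ} {ε : ℝ} {x : ℕ} {S : Finset ℕ}
    (hcard : (#{n ∈ Icc 1 x | ε * f n ≤ |ψ n - f n|} : ℝ) < #S) (hS : S ⊆ Icc 1 x) :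
    ∃ n ∈ S, |ψ n - f n| < ε * f n := by
  by_contra! h
  have hsub : S ⊆ {n ∈ Icc 1 x | ε * f n ≤ |ψ n - f n|} := fun n hn =>
    mem_filter.2 ⟨hS hn, h n hn⟩
  exact hcard.not_ge (by exact_mod_cast card_le_card hsub)

lemma Monotone.one_sub_mul_lt_one_add_mul {ψ f : ℕ → ℝ} (hf : Monotone f) {ε : ℝ}
    (hε₀ : 0 < ε) (hε₁ : ε < 1) {m n : ℕ} (hmn : m ≤ n) (hm : |ψ m - f m| < ε * f m)
    (hn : |ψ n - f n| < ε * f n) : (1 - ε) * ψ m < (1 + ε) * ψ n := by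
  have hfmn := hf hmn
  have hm' := (abs_lt.1 hm).2
  have hn' := (abs_lt.1 hn).1
  nlinarith [mul_le_mul_of_nonneg_left hfmn (by nlinarith : 0 ≤ (1 - ε) * (1 + ε))]

lemma HasNormalOrder.exists_card_le {ψ f : ℕ → ℝ} (h : HasNormalOrder ψ f) {ε δ : ℝ}
    (hε : 0 < ε) (hδ : 0 < δ) (c N₀ : ℕ) (hc : 0 < c) :
    ∃ N ≥ N₀, (#{n ∈ Icc 1 (c * N) | ε * f n ≤ |ψ n - f n|} : ℝ) ≤ δ * (c * N : ℕ) := by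
  have hmul : Tendsto (c * ·) atTop atTop :=
    tendsto_atTop_mono (fun N => Nat.le_mul_of_pos_left N hc) tendsto_id
  obtain ⟨N, hN, hbound⟩ := ((eventually_ge_atTop N₀).and
    (hmul.eventually ((h.2.2 ε hε).bound hδ))).exists
  refine ⟨N, hN, ?_⟩
  simpa only [Real.norm_natCast] using hbound

theorem totient_no_normal_order :
    ¬ ∃ f : ℕ → ℝ, HasNormalOrder (fun n => (Nat.totient n : ℝ)) f := by
  rintro ⟨f, hf⟩
  obtain ⟨N, hN, hexc⟩ := hf.exists_card_le (ε := 1 / 20) (δ := 1 / 10200) (by norm_num)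
    (by norm_num) 102 1000000 (by norm_num)
  replace hexc := hexc.trans_eq (show _ = (N : ℝ) / 100 by push_cast; ring)
  have hsixes : (N : ℝ) / 100 < #{n ∈ Ioc (101 * N) (102 * N) | 6 ∣ n} := by
    have := le_card_filter_dvd_Ioc (d := 6) (by norm_num) (a := 101 * N) (b := 102 * N) (by omega)
    have hNR : (1000000 : ℝ) ≤ N := by exact_mod_cast hN
    push_cast at this
    linarith
  have hodds := lt_card_filter_odd_two_fifths_le_totient le_rfl hN
  obtain ⟨n₂, hn₂, hclose₂⟩ := exists_abs_sub_lt_of_card_lt (hexc.trans_lt hsixes)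
    fun n hn => by simp only [mem_filter, mem_Ioc, mem_Icc] at hn ⊢; omega
  obtain ⟨n₁, hn₁, hclose₁⟩ := exists_abs_sub_lt_of_card_lt (hexc.trans_lt hodds)
    fun n hn => by simp only [mem_filter, mem_Ioc, mem_Icc] at hn ⊢; omega
  simp only [mem_filter, mem_Ioc] at hn₁ hn₂
  have hlt := hf.1.one_sub_mul_lt_one_add_mul (ψ := fun n => (n.totient : ℝ)) (ε := 1 / 20)
    (by norm_num) (by norm_num) (show n₁ ≤ n₂ by omega) hclose₁ hclose₂
  have h₁ : (100 * N : ℕ) < (n₁ : ℝ) := by exact_mod_cast hn₁.1.1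
  have h₂ : (n₂ : ℝ) ≤ (102 * N : ℕ) := by exact_mod_cast hn₂.1.2
  push_cast at h₁ h₂
  linarith [hn₁.2.2, Nat.totient_le_div_three_of_six_dvd hn₂.2]
end

section
/- The divisor function d(n) does not have a normal order; i.e., there is no increasing nonnegative function f such that for every ε > 0, the number of n ≤ x with |d(n) − f(n)| ≥ ε f(n) is o(x) as x → ∞. -/
/-!
Let `f` be a monotone normal order of `d` and `ε = 1/10`. Since the exceptional set has density
zero, for every large `t` there are odd `m₁ ∈ (6t, 8t)` and `m₂ ∈ (16t, 24t)` such that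
`2 m₁`, `2¹² m₁`, `m₂`, `2¹⁰ m₂` are all non-exceptional. Writing `a = d(m₁)` and `b = d(m₂)`,
these have `d`-values `2a`, `13a`, `b`, `11b`, while `2 m₁ < m₂` and `2¹⁰ m₂ < 2¹² m₁`.
Monotonicity of `f` then gives `2a ≲ b` and `11b ≲ 13a` up to factors `(1 ± ε)`,
which is impossible because `2 · 11 > 13`.
-/

open Filter Asymptotics

open Finset

theorem Finset.exists_mem_apply_notMem_of_two_mul_card_lt {α β : Type*}
    {s : Finset α} {B : Finset β} {g₁ g₂ : α → β} (h₁ : Set.InjOn g₁ s) (h₂ : Set.InjOn g₂ s)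
    (hcard : 2 * #B < #s) : ∃ x ∈ s, g₁ x ∉ B ∧ g₂ x ∉ B := by
  classical
  by_contra! hall
  have hcover : s ⊆ {x ∈ s | g₁ x ∈ B} ∪ {x ∈ s | g₂ x ∈ B} := fun x hx => by
    by_cases hx₁ : g₁ x ∈ B
    · exact mem_union_left _ (mem_filter.mpr ⟨hx, hx₁⟩)
    · exact mem_union_right _ (mem_filter.mpr ⟨hx, hall x hx hx₁⟩)
  have hB {g : α → β} (hg : Set.InjOn g s) : #{x ∈ s | g x ∈ B} ≤ #B :=
    card_le_card_of_injOn g (fun x hx => (mem_filter.mp hx).2) (hg.mono (filter_subset _ _))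
  have := (card_le_card hcover).trans (card_union_le _ _)
  linarith [hB h₁, hB h₂]

theorem Nat.card_divisors_two_pow_mul {m : ℕ} (hm : Odd m) (k : ℕ) :
    #(2 ^ k * m).divisors = (k + 1) * #m.divisors := by
  have hcop : Nat.Coprime (2 ^ k) m :=
    (Nat.coprime_two_left.mpr hm).pow_left k
  rw [hcop.card_divisors_mul, ← ArithmeticFunction.sigma_zero_apply,
    ArithmeticFunction.sigma_zero_apply_prime_pow Nat.prime_two]

noncomputable def exceptionalSet (ψ f : ℕ → ℝ) (ε : ℝ) (X : ℕ) : Finset ℕ :=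
  {n ∈ Icc 1 X | ε * f n ≤ |ψ n - f n|}

theorem abs_sub_lt_of_notMem_exceptionalSet {ψ f : ℕ → ℝ} {ε : ℝ} {X n : ℕ} (hn : n ∈ Icc 1 X)
    (hnot : n ∉ exceptionalSet ψ f ε X) : |ψ n - f n| < ε * f n := by
  by_contra! hbig
  exact hnot (mem_filter.mpr ⟨hn, hbig⟩)

theorem HasNormalOrder.eventually_card_exceptionalSet_le {ψ f : ℕ → ℝ} (hf : HasNormalOrder ψ f)
    {ε : ℝ} (hε : 0 < ε) {C : ℕ} (hC : 0 < C) {c : ℝ} (hc : 0 < c) :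
    ∀ᶠ t in atTop, (#(exceptionalSet ψ f ε (C * t)) : ℝ) ≤ c * t := by
  have hlin : (fun t : ℕ => ((C * t : ℕ) : ℝ)) =O[atTop] fun t : ℕ => (t : ℝ) :=
    IsBigO.of_bound C (Eventually.of_forall fun t => by simp)
  have hexc : (fun t : ℕ => (#(exceptionalSet ψ f ε (C * t)) : ℝ)) =o[atTop]
      fun t : ℕ => ((C * t : ℕ) : ℝ) :=
    (hf.2.2 ε hε).comp_tendsto (tendsto_id.const_mul_atTop' hC)
  filter_upwards [(hexc.trans_isBigO hlin).def hc] with t ht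
  simpa only [Real.norm_natCast] using ht

theorem HasNormalOrder.eventually_exists_odd {ψ f : ℕ → ℝ} (hf : HasNormalOrder ψ f)
    {ε : ℝ} (hε : 0 < ε) (k₁ k₂ : ℕ) {a b : ℕ} (hab : a < b) :
    ∀ᶠ t in atTop, ∃ m, Odd m ∧ 2 * a * t < m ∧ m < 2 * b * t ∧
      |ψ (2 ^ k₁ * m) - f (2 ^ k₁ * m)| < ε * f (2 ^ k₁ * m) ∧
      |ψ (2 ^ k₂ * m) - f (2 ^ k₂ * m)| < ε * f (2 ^ k₂ * m) := by
  set C := 2 ^ (k₁ + k₂) * (2 * b)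
  have hC : 0 < C := Nat.mul_pos (by positivity) (by omega)
  have hab' : (0 : ℝ) < (b - a : ℕ) := by exact_mod_cast Nat.sub_pos_of_lt hab
  filter_upwards [hf.eventually_card_exceptionalSet_le hε hC
    (by positivity : (0 : ℝ) < (b - a : ℕ) / 3), eventually_ge_atTop 1] with t hsmall ht
  have hcard : 2 * #(exceptionalSet ψ f ε (C * t)) < #(Ico (a * t) (b * t)) := by
    rw [Nat.card_Ico, ← Nat.sub_mul]
    have ht' : (1 : ℝ) ≤ t := by exact_mod_cast ht
    exact_mod_cast (by nlinarith : (2 * #(exceptionalSet ψ f ε (C * t)) : ℝ) < (b - a : ℕ) * t)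
  have hinj (k : ℕ) : Set.InjOn (fun j => 2 ^ k * (2 * j + 1)) (Ico (a * t) (b * t)) :=
    fun i _ j _ hij => by simpa using hij
  obtain ⟨j, hj, hj₁, hj₂⟩ :=
    exists_mem_apply_notMem_of_two_mul_card_lt (hinj k₁) (hinj k₂) hcard
  rw [mem_Ico] at hj
  have hmem {k : ℕ} (hk : k ≤ k₁ + k₂) : 2 ^ k * (2 * j + 1) ∈ Icc 1 (C * t) := by
    refine mem_Icc.mpr ⟨Nat.one_le_iff_ne_zero.mpr (by positivity), ?_⟩
    calc 2 ^ k * (2 * j + 1) ≤ 2 ^ (k₁ + k₂) * (2 * b * t) :=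
          Nat.mul_le_mul (Nat.pow_le_pow_right two_pos hk) (by rw [mul_assoc]; omega)
      _ = C * t := by ring
  exact ⟨2 * j + 1, odd_two_mul_add_one j, by rw [mul_assoc]; omega, by rw [mul_assoc]; omega,
    abs_sub_lt_of_notMem_exceptionalSet (hmem (by omega)) hj₁,
    abs_sub_lt_of_notMem_exceptionalSet (hmem (by omega)) hj₂⟩

theorem divisor_no_normal_order :
    ¬ ∃ f : ℕ → ℝ, HasNormalOrder (fun n => (n.divisors.card : ℝ)) f := by
  rintro ⟨f, hf⟩
  have hsmall := hf.eventually_exists_odd (ε := 1 / 10) (by norm_num) 1 12 (a := 3) (b := 4)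
    (by norm_num)
  have hlarge := hf.eventually_exists_odd (ε := 1 / 10) (by norm_num) 0 10 (a := 8) (b := 12)
    (by norm_num)
  obtain ⟨t, ⟨m₁, hodd₁, hlo₁, hhi₁, h2, h4096⟩, ⟨m₂, hodd₂, hlo₂, hhi₂, h1, h1024⟩⟩ :=
    (hsmall.and hlarge).exists
  rw [Nat.card_divisors_two_pow_mul hodd₁] at h2 h4096
  rw [Nat.card_divisors_two_pow_mul hodd₂] at h1 h1024
  norm_num [abs_lt] at h2 h4096 h1 h1024
  have hmono₁ : f (2 * m₁) ≤ f m₂ := hf.1 (by omega)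
  have hmono₂ : f (1024 * m₂) ≤ f (4096 * m₁) := hf.1 (by omega)
  linarith [h2.1, h2.2, h4096.1, h4096.2, h1.1, h1.2, h1024.1, h1024.2]
end

section
/- As x → ∞, ∑_{n≤x} φ(n) − (3/π²)x² = O(x log x). -/
/-!
Since `∑_{d ∣ n} φ d = n`, Möbius inversion gives `φ = μ * id`, hence
`2 ∑_{n ≤ x} φ n = ∑_{d ≤ x} μ d ⌊x/d⌋ (⌊x/d⌋ + 1)`. Replacing `⌊x/d⌋ (⌊x/d⌋ + 1)` by `(x/d)²`
costs at most `x/d` per term, in total `x · H_x ≤ x (1 + log x)`. The main term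
`x² ∑_{d ≤ x} μ d / d²` differs from `x² / ζ(2) = 6x²/π²` by `x²` times a tail of
`∑ μ d / d²`, which is at most `∑_{d > x} 1/d² ≤ 1/x`.
-/

open Filter Asymptotics Finset ArithmeticFunction Topology
open scoped ArithmeticFunction.Moebius LSeries.notation

namespace ArithmeticFunction

theorem coe_moebius_mul_coe_id_apply_eq_totient {R : Type*} [Ring R] (n : ℕ) :
    ((μ : ArithmeticFunction R) * (ArithmeticFunction.id : ArithmeticFunction ℕ)) n =
      n.totient := by
  rcases n.eq_zero_or_pos with rfl | hn
  · simp
  have hinv := (sum_eq_iff_sum_smul_moebius_eq (f := fun n => (n.totient : R))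
    (g := fun n => (n : R))).mp (fun n _ => by rw [← Nat.cast_sum, n.sum_totient]) n hn
  simpa only [mul_apply, intCoe_apply, natCoe_apply, id_apply, zsmul_eq_mul] using hinv

end ArithmeticFunction

theorem two_mul_sum_Ioc_natCast {R : Type*} [CommSemiring R] (m : ℕ) :
    2 * ∑ k ∈ Ioc 0 m, (k : R) = m * (m + 1) := by
  induction m with
  | zero => simp
  | succ m ih =>
    rw [sum_Ioc_succ_top (Nat.zero_le m), mul_add, ih]
    push_cast
    ring

theorem two_mul_sum_Ioc_totient {R : Type*} [CommRing R] (x : ℕ) :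
    2 * ∑ n ∈ Ioc 0 x, (n.totient : R) =
      ∑ d ∈ Ioc 0 x, (μ d : R) * ((x / d : ℕ) * ((x / d : ℕ) + 1)) := by
  rw [← sum_congr rfl fun n _ => coe_moebius_mul_coe_id_apply_eq_totient n,
    sum_Ioc_mul_eq_sum_sum, mul_sum]
  refine sum_congr rfl fun d _ => ?_
  simp only [natCoe_apply, id_apply, intCoe_apply]
  rw [mul_left_comm, two_mul_sum_Ioc_natCast]

theorem abs_moebius_cast_le_one (n : ℕ) : |(μ n : ℝ)| ≤ 1 := by
  exact_mod_cast abs_moebius_le_one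

theorem abs_floor_mul_floor_add_one_sub_sq_le {K : Type*} [Field K] [LinearOrder K]
    [IsStrictOrderedRing K] [FloorSemiring K] {r : K} (hr : 0 ≤ r) :
    |(⌊r⌋₊ : K) * (⌊r⌋₊ + 1) - r ^ 2| ≤ r := by
  have h₁ := Nat.floor_le hr
  have h₂ := Nat.lt_floor_add_one r
  rw [abs_le]
  constructor <;> nlinarith

theorem LSeries_moebius_two : L ↗μ 2 = 6 / (Real.pi : ℂ) ^ 2 := by
  have h := LSeries_zeta_mul_Lseries_moebius (s := 2) (by norm_num)
  rw [LSeries_zeta_eq_riemannZeta (by norm_num), riemannZeta_two] at h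
  have hπ : (Real.pi : ℂ) ≠ 0 := Complex.ofReal_ne_zero.mpr Real.pi_ne_zero
  field_simp at h ⊢
  linear_combination h

theorem hasSum_moebius_div_sq : HasSum (fun n : ℕ => (μ n : ℝ) / n ^ 2) (6 / Real.pi ^ 2) := by
  have h := (LSeriesSummable_moebius_iff.mpr (by norm_num : 1 < (2 : ℂ).re)).LSeriesHasSum
  rw [LSeriesHasSum, LSeries_moebius_two] at h
  rw [← Complex.hasSum_ofReal]
  convert h using 1
  · ext n
    rcases eq_or_ne n 0 with rfl | hn
    · simp
    · simp [LSeries.term, hn]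
  · push_cast; rfl

/-- At `n = 0` the hypothesis `hbound` reads `|f 0| ≤ 0⁻¹ = 0`, so it forces `f 0 = 0`. -/
theorem abs_sub_sum_Ioc_le_inv {f : ℕ → ℝ} {s : ℝ} (hf : HasSum f s)
    (hbound : ∀ n, |f n| ≤ ((n : ℝ) ^ 2)⁻¹) {N : ℕ} (hN : N ≠ 0) :
    |s - ∑ n ∈ Ioc 0 N, f n| ≤ (N : ℝ)⁻¹ := by
  have hf0 : f 0 = 0 := by simpa using hbound 0
  have hpartial : Tendsto (fun M => ∑ n ∈ Ioc 0 M, f n) atTop (𝓝 s) := by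
    refine (hf.tendsto_sum_nat.comp (tendsto_add_atTop_nat 1)).congr fun M => ?_
    rw [Function.comp_apply, sum_range_succ', hf0, add_zero, range_eq_Ico, sum_Ico_add',
      ← Ico_add_one_add_one_eq_Ioc]
  have hblock : ∀ M ≥ N,
      |∑ n ∈ Ioc 0 M, f n - ∑ n ∈ Ioc 0 N, f n| ≤ (N : ℝ)⁻¹ := by
    intro M hM
    rw [← sum_Ioc_consecutive _ (Nat.zero_le N) hM, add_sub_cancel_left]
    calc |∑ n ∈ Ioc N M, f n| ≤ ∑ n ∈ Ioc N M, ((n : ℝ) ^ 2)⁻¹ :=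
          (abs_sum_le_sum_abs _ _).trans (sum_le_sum fun n _ => hbound n)
      _ ≤ (N : ℝ)⁻¹ - (M : ℝ)⁻¹ := sum_Ioc_inv_sq_le_sub hN hM
      _ ≤ (N : ℝ)⁻¹ := sub_le_self _ (by positivity)
  exact le_of_tendsto ((hpartial.sub_const _).abs) (eventually_atTop.mpr ⟨N, hblock⟩)

theorem abs_sum_moebius_mul_floor_sub_sq_le (x : ℕ) :
    |∑ d ∈ Ioc 0 x, (μ d : ℝ) *
        ((⌊(x / d : ℝ)⌋₊ : ℝ) * (⌊(x / d : ℝ)⌋₊ + 1) - (x / d : ℝ) ^ 2)| ≤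
      x * (1 + Real.log x) :=
  calc _ ≤ ∑ d ∈ Ioc 0 x, (x / d : ℝ) := by
        refine (abs_sum_le_sum_abs _ _).trans (sum_le_sum fun d _ => ?_)
        rw [abs_mul]
        exact (mul_le_of_le_one_left (abs_nonneg _) (abs_moebius_cast_le_one d)).trans
          (abs_floor_mul_floor_add_one_sub_sq_le (by positivity))
    _ = x * harmonic x := by
        simp only [harmonic_eq_sum_Icc, Rat.cast_sum, Rat.cast_inv, Rat.cast_natCast, mul_sum,
          div_eq_mul_inv, ← Icc_add_one_left_eq_Ioc, zero_add]
    _ ≤ x * (1 + Real.log x) := by gcongr; exact harmonic_le_one_add_log x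

theorem abs_sq_mul_sum_moebius_div_sq_sub_le {x : ℕ} (hx : x ≠ 0) :
    |x ^ 2 * (∑ d ∈ Ioc 0 x, (μ d : ℝ) / d ^ 2 - 6 / Real.pi ^ 2)| ≤ (x : ℝ) := by
  have htail := abs_sub_sum_Ioc_le_inv hasSum_moebius_div_sq (fun n => by
    rw [abs_div, abs_of_nonneg (by positivity : (0 : ℝ) ≤ (n : ℝ) ^ 2), div_eq_mul_inv]
    exact mul_le_of_le_one_left (by positivity) (abs_moebius_cast_le_one n)) hx
  rw [abs_mul, abs_sub_comm, abs_of_nonneg (by positivity)]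
  calc _ ≤ (x : ℝ) ^ 2 * (x : ℝ)⁻¹ := by gcongr
    _ = x := by field_simp

theorem two_mul_abs_sum_Ioc_totient_sub_le {x : ℕ} (hx : x ≠ 0) :
    2 * |∑ n ∈ Ioc 0 x, (n.totient : ℝ) - 3 / Real.pi ^ 2 * x ^ 2| ≤
      x * (2 + Real.log x) := by
  have hsq : ∑ d ∈ Ioc 0 x, (μ d : ℝ) * (x / d : ℝ) ^ 2 =
      x ^ 2 * ∑ d ∈ Ioc 0 x, (μ d : ℝ) / d ^ 2 := by
    rw [mul_sum]
    exact sum_congr rfl fun d _ => by ring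
  have hsplit : 2 * (∑ n ∈ Ioc 0 x, (n.totient : ℝ) - 3 / Real.pi ^ 2 * x ^ 2) =
      ∑ d ∈ Ioc 0 x, (μ d : ℝ) *
          ((⌊(x / d : ℝ)⌋₊ : ℝ) * (⌊(x / d : ℝ)⌋₊ + 1) - (x / d : ℝ) ^ 2) +
        x ^ 2 * (∑ d ∈ Ioc 0 x, (μ d : ℝ) / d ^ 2 - 6 / Real.pi ^ 2) := by
    rw [mul_sub, two_mul_sum_Ioc_totient]
    simp only [Nat.floor_div_eq_div, mul_sub, sum_sub_distrib, hsq]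
    ring
  nth_rw 1 [← abs_two]
  rw [← abs_mul, hsplit]
  have hfloor := abs_sum_moebius_mul_floor_sub_sq_le x
  have htail := abs_sq_mul_sum_moebius_div_sq_sub_le hx
  refine (abs_add_le _ _).trans ?_
  linarith

theorem totient_sum_explicit :
    (fun x : ℕ => (∑ n ∈ Finset.Icc 1 x, (Nat.totient n : ℝ)) -
        (3 / Real.pi ^ 2) * (x : ℝ) ^ 2)
      =O[atTop] fun x : ℕ => (x : ℝ) * Real.log x := by
  refine IsBigO.of_bound (3 / 2) ?_
  filter_upwards [eventually_ge_atTop 3] with x hx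
  have hlog : 1 ≤ Real.log x := by
    rw [Real.le_log_iff_exp_le (by positivity)]
    calc Real.exp 1 ≤ 3 := by linarith [Real.exp_one_lt_d9]
      _ ≤ x := by exact_mod_cast hx
  have hx_le : (x : ℝ) ≤ x * Real.log x := le_mul_of_one_le_right (by positivity) hlog
  have key := two_mul_abs_sum_Ioc_totient_sub_le (x := x) (by omega)
  rw [← Icc_add_one_left_eq_Ioc, zero_add] at key
  rw [Real.norm_eq_abs, Real.norm_eq_abs,
    abs_of_nonneg (by positivity : (0 : ℝ) ≤ x * Real.log x)]
  linarith
end
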